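/- arXiv:2503.01373 — 2 statements merged into one kernel-verified Lean document; each statement's English description precedes it below -/
import Mathlib

section
/- Let ω be a continuous 1-form on ℝⁿ whose distributional exterior differential dω is represented by a continuous 2-form. Then ⟨∂T, ω⟩ = ⟨T, dω⟩ for every normal 2-current T on ℝⁿ with compact support. -/
open Set Filter Metric MeasureTheory Topology
open scoped Topology ENNReal

set_option maxHeartbeats 1000000

noncomputable section

abbrev Euc (n : ℕ) := EuclideanSpace ℝ (Fin n)

/-- The `i`-th standard basis vector of `ℝⁿ`. -/
def eVec {n : ℕ} (i : Fin n) : Euc n := EuclideanSpace.single i (1 : ℝ)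

section Helpers

open ContinuousLinearMap
open scoped Convolution

lemma conv_swap {n : ℕ} (φ : ContDiffBump (0 : Euc n)) (f : Euc n → ℝ) (x₀ : Euc n) :
    (φ.normed volume ⋆[lsmul ℝ ℝ, volume] f) x₀ = ∫ y, φ.normed volume (x₀ - y) * f y := by
  rw [convolution_eq_swap]
  simp [smul_eq_mul]

lemma contDiff_conv {n : ℕ} (φ : ContDiffBump (0 : Euc n)) (f : Euc n → ℝ) (hf : Continuous f) :
    ContDiff ℝ (⊤ : ℕ∞) (φ.normed volume ⋆[lsmul ℝ ℝ, volume] f) :=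
  HasCompactSupport.contDiff_convolution_left _ φ.hasCompactSupport_normed
    φ.contDiff_normed (hf.locallyIntegrable)

lemma fderiv_conv_apply {n : ℕ} (φ : ContDiffBump (0 : Euc n)) (f : Euc n → ℝ)
    (hf : Continuous f) (x₀ v : Euc n) :
    fderiv ℝ (φ.normed volume ⋆[lsmul ℝ ℝ, volume] f) x₀ v
      = ∫ y, fderiv ℝ (φ.normed volume) (x₀ - y) v * f y := by
  have hd := HasCompactSupport.hasFDerivAt_convolution_left (μ := (volume : Measure (Euc n)))
    (lsmul ℝ ℝ)
    (φ.hasCompactSupport_normed (μ := volume)) (φ.contDiff_normed (μ := volume) (n := 1))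
    hf.locallyIntegrable x₀
  rw [hd.fderiv]
  rw [convolution_eq_swap]
  have hDcont : Continuous (fderiv ℝ (φ.normed volume)) :=
    (φ.contDiff_normed (n := ⊤) (μ := volume)).continuous_fderiv (by simp)
  have hDcs : HasCompactSupport (fderiv ℝ (φ.normed volume)) :=
    φ.hasCompactSupport_normed.fderiv ℝ
  have hint : Integrable (fun y => ((lsmul ℝ ℝ).precompL (Euc n))
      (fderiv ℝ (φ.normed volume) (x₀ - y)) (f y)) volume := by
    have heq : (fun y => ((lsmul ℝ ℝ).precompL (Euc n))
        (fderiv ℝ (φ.normed volume) (x₀ - y)) (f y))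
        = fun y => f y • (fderiv ℝ (φ.normed volume) (x₀ - y)) := by
      ext y u
      simp [mul_comm]
    rw [heq]
    apply Continuous.integrable_of_hasCompactSupport
    · exact hf.smul (hDcont.comp (continuous_const.sub continuous_id))
    · have h1 : HasCompactSupport (fun y => fderiv ℝ (φ.normed volume) (x₀ - y)) := by
        have := hDcs.comp_homeomorph (Homeomorph.subLeft x₀)
        simpa [Function.comp_def] using this
      apply h1.mono
      intro y hy
      simp only [Function.mem_support] at hy ⊢
      exact fun h0 => hy (by rw [h0, smul_zero])
  rw [ContinuousLinearMap.integral_apply hint]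
  simp

lemma double_sum_delta {n : ℕ} (i j : Fin n) (F : Fin n → Fin n → ℝ) :
    ∑ p : Fin n, ∑ q : Fin n,
      (((if p = i then (1:ℝ) else 0) * (if q = j then 1 else 0)) -
        (if p = j then (1:ℝ) else 0) * (if q = i then 1 else 0)) * F p q
      = F i j - F j i := by
  have h1 : ∀ (a b : Fin n) (G : Fin n → Fin n → ℝ),
      (∑ p : Fin n, ∑ q : Fin n,
        ((if p = a then (1:ℝ) else 0) * (if q = b then 1 else 0)) * G p q) = G a b := by
    intro a b G
    have inner : ∀ p : Fin n, (∑ q : Fin n, ((if p = a then (1:ℝ) else 0) * (if q = b then 1 else 0)) * G p q)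
        = (if p = a then (1:ℝ) else 0) * G p b := by
      intro p
      rw [Finset.sum_eq_single b]
      · simp
      · intro c _ hc; simp [hc]
      · simp
    simp only [inner]
    rw [Finset.sum_eq_single a]
    · simp
    · intro c _ hc; simp [hc]
    · simp
  have expand : ∀ p q : Fin n,
      (((if p = i then (1:ℝ) else 0) * (if q = j then 1 else 0)) -
        (if p = j then (1:ℝ) else 0) * (if q = i then 1 else 0)) * F p q
      = ((if p = i then (1:ℝ) else 0) * (if q = j then 1 else 0)) * F p q
        - ((if p = j then (1:ℝ) else 0) * (if q = i then 1 else 0)) * F p q := by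
    intro p q; ring
  simp only [expand, Finset.sum_sub_distrib]
  rw [h1 i j F, h1 j i F]

lemma key_curl {n : ℕ}
    (ω : Euc n → (Euc n →L[ℝ] ℝ)) (hω : Continuous ω)
    (Ω₂ : Euc n → (Euc n →L[ℝ] Euc n →L[ℝ] ℝ))
    (hΩalt : ∀ x v w, Ω₂ x v w = -Ω₂ x w v)
    (hrepr : ∀ τ : Euc n → Fin n → Fin n → ℝ,
      (∀ i j, ContDiff ℝ (⊤ : ℕ∞) (fun x => τ x i j)) →
      (∀ i j, HasCompactSupport (fun x => τ x i j)) →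
      (∀ x i j, τ x i j = -τ x j i) →
      (∫ x, ∑ i : Fin n, ∑ j : Fin n, τ x i j * Ω₂ x (eVec i) (eVec j)) =
        -2 * ∫ x, ∑ i : Fin n, ∑ j : Fin n,
          fderiv ℝ (fun y => τ y i j) x (eVec i) * ω x (eVec j))
    (φ : ContDiffBump (0 : Euc n)) (i j : Fin n) (x₀ : Euc n) :
    (∫ y, fderiv ℝ (φ.normed volume) (x₀ - y) (eVec i) * ω y (eVec j))
      - (∫ y, fderiv ℝ (φ.normed volume) (x₀ - y) (eVec j) * ω y (eVec i))
      = ∫ y, φ.normed volume (x₀ - y) * Ω₂ y (eVec i) (eVec j) := by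
  classical
  set ρ : Euc n → ℝ := φ.normed volume with hρdef
  set c : Euc n → ℝ := fun y => ρ (x₀ - y) with hcdef
  have hρsmooth : ContDiff ℝ (⊤ : ℕ∞) ρ := φ.contDiff_normed
  have hρcs : HasCompactSupport ρ := φ.hasCompactSupport_normed
  have hcsmooth : ContDiff ℝ (⊤ : ℕ∞) c :=
    hρsmooth.comp (contDiff_const.sub contDiff_id)
  have hccs : HasCompactSupport c := by
    have := hρcs.comp_homeomorph (Homeomorph.subLeft x₀)
    simpa [Function.comp_def] using this
  have hcdiff : Differentiable ℝ c := hcsmooth.differentiable (by simp)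
  have hasD : ∀ y, HasFDerivAt c (-(fderiv ℝ ρ (x₀ - y))) y := by
    intro y
    have h1 : HasFDerivAt (fun y : Euc n => x₀ - y) (-(ContinuousLinearMap.id ℝ (Euc n))) y := by
      simpa using (hasFDerivAt_id y).const_sub x₀
    have h2 := ((hρsmooth.differentiable (by simp) (x₀ - y)).hasFDerivAt).comp y h1
    refine h2.congr_fderiv ?_
    ext v; simp [hcdef]
  have hfderivc : ∀ y, fderiv ℝ c y = -(fderiv ℝ ρ (x₀ - y)) := fun y => (hasD y).fderiv
  set δ : Fin n → Fin n → ℝ := fun p q =>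
    (if p = i then (1:ℝ) else 0) * (if q = j then 1 else 0) -
      (if p = j then 1 else 0) * (if q = i then 1 else 0) with hδdef
  set τ' : Euc n → Fin n → Fin n → ℝ := fun y p q => c y * δ p q with hτ'def
  have hsmooth : ∀ p q, ContDiff ℝ (⊤ : ℕ∞) (fun y => τ' y p q) :=
    fun p q => hcsmooth.mul contDiff_const
  have hcs : ∀ p q, HasCompactSupport (fun y => τ' y p q) := by
    intro p q
    apply hccs.mono
    intro y hy
    simp only [Function.mem_support] at hy ⊢
    exact fun h0 => hy (by simp [hτ'def, h0])
  have halt : ∀ y p q, τ' y p q = -τ' y q p := by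
    intro y p q
    simp only [hτ'def, hδdef]
    ring
  have H := hrepr τ' hsmooth hcs halt
  have hL : ∀ y, (∑ p : Fin n, ∑ q : Fin n, τ' y p q * Ω₂ y (eVec p) (eVec q))
      = 2 * (c y * Ω₂ y (eVec i) (eVec j)) := by
    intro y
    have e1 : ∀ p q : Fin n, τ' y p q * Ω₂ y (eVec p) (eVec q)
        = (((if p = i then (1:ℝ) else 0) * (if q = j then 1 else 0)) -
            (if p = j then (1:ℝ) else 0) * (if q = i then 1 else 0)) *
              (c y * Ω₂ y (eVec p) (eVec q)) := by
      intro p q; simp only [hτ'def, hδdef]; ring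
    simp only [e1]
    rw [double_sum_delta i j (fun p q => c y * Ω₂ y (eVec p) (eVec q))]
    rw [hΩalt y (eVec j) (eVec i)]
    ring
  have hDτ : ∀ p q y, fderiv ℝ (fun z => τ' z p q) y = δ p q • fderiv ℝ c y := by
    intro p q y
    have : (fun z => τ' z p q) = fun z => c z * δ p q := rfl
    rw [this, fderiv_mul_const (hcdiff y)]
  have hR : ∀ y, (∑ p : Fin n, ∑ q : Fin n, fderiv ℝ (fun z => τ' z p q) y (eVec p) * ω y (eVec q))
      = -(fderiv ℝ ρ (x₀ - y) (eVec i) * ω y (eVec j))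
        + fderiv ℝ ρ (x₀ - y) (eVec j) * ω y (eVec i) := by
    intro y
    have e1 : ∀ p q : Fin n, fderiv ℝ (fun z => τ' z p q) y (eVec p) * ω y (eVec q)
        = (((if p = i then (1:ℝ) else 0) * (if q = j then 1 else 0)) -
            (if p = j then (1:ℝ) else 0) * (if q = i then 1 else 0)) *
              (fderiv ℝ c y (eVec p) * ω y (eVec q)) := by
      intro p q
      rw [hDτ p q y]
      simp only [ContinuousLinearMap.smul_apply, smul_eq_mul, hδdef]
      ring
    simp only [e1]
    rw [double_sum_delta i j (fun p q => fderiv ℝ c y (eVec p) * ω y (eVec q))]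
    simp only [hfderivc y, ContinuousLinearMap.neg_apply]
    ring
  simp only [hL, hR] at H
  have hg : ∀ (a b : Fin n), Integrable (fun y => fderiv ℝ ρ (x₀ - y) (eVec a) * ω y (eVec b)) volume := by
    intro a b
    apply Continuous.integrable_of_hasCompactSupport
    · have hDcont : Continuous (fderiv ℝ ρ) := hρsmooth.continuous_fderiv (by simp)
      exact (((ContinuousLinearMap.apply ℝ ℝ (eVec a)).continuous).comp
        (hDcont.comp (continuous_const.sub continuous_id))).mul
        (((ContinuousLinearMap.apply ℝ ℝ (eVec b)).continuous).comp hω)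
    · have h1 : HasCompactSupport (fun y => fderiv ℝ ρ (x₀ - y)) := by
        have := (hρcs.fderiv ℝ).comp_homeomorph (Homeomorph.subLeft x₀)
        simpa [Function.comp_def] using this
      apply h1.mono
      intro y hy
      simp only [Function.mem_support] at hy ⊢
      exact fun h0 => hy (by simp [h0])
  rw [integral_const_mul] at H
  have hsplit : (∫ y, (-(fderiv ℝ ρ (x₀ - y) (eVec i) * ω y (eVec j))
      + fderiv ℝ ρ (x₀ - y) (eVec j) * ω y (eVec i)))
      = -(∫ y, fderiv ℝ ρ (x₀ - y) (eVec i) * ω y (eVec j))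
        + ∫ y, fderiv ℝ ρ (x₀ - y) (eVec j) * ω y (eVec i) := by
    simp only [neg_add_eq_sub]
    rw [integral_sub (hg j i) (hg i j)]
  rw [hsplit] at H
  linarith

lemma conv_bound {n : ℕ} (φ : ContDiffBump (0 : Euc n)) (hφ1 : φ.rOut ≤ 1)
    (f : Euc n → ℝ) (C R : ℝ)
    (hf : ∀ y : Euc n, ‖y‖ ≤ R + 1 → |f y| ≤ C)
    (x : Euc n) (hx : ‖x‖ ≤ R) :
    |(φ.normed volume ⋆[lsmul ℝ ℝ, volume] f) x| ≤ C := by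
  rw [convolution_def]
  have hb : ∀ t : Euc n, ‖(lsmul ℝ ℝ) (φ.normed volume t) (f (x - t))‖ ≤ C * φ.normed volume t := by
    intro t
    simp only [lsmul_apply, smul_eq_mul, Real.norm_eq_abs, abs_mul]
    by_cases ht : φ.normed volume t = 0
    · simp [ht]
    · have hts : t ∈ Function.support (φ.normed volume) := ht
      rw [φ.support_normed_eq] at hts
      have htn : ‖t‖ < φ.rOut := by simpa using mem_ball_zero_iff.mp hts
      have hxt : ‖x - t‖ ≤ R + 1 := by
        calc ‖x - t‖ ≤ ‖x‖ + ‖t‖ := norm_sub_le _ _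
        _ ≤ R + 1 := by have := hφ1; linarith
      have := hf (x - t) hxt
      have h0 : 0 ≤ φ.normed volume t := φ.nonneg_normed t
      calc |φ.normed volume t| * |f (x - t)| = φ.normed volume t * |f (x - t)| := by
            rw [abs_of_nonneg h0]
        _ ≤ φ.normed volume t * C := mul_le_mul_of_nonneg_left this h0
        _ = C * φ.normed volume t := mul_comm _ _
  have hint : Integrable (fun t => C * φ.normed volume t) volume :=
    (φ.integrable_normed).const_mul C
  calc |∫ t, (lsmul ℝ ℝ) (φ.normed volume t) (f (x - t))| ≤ ∫ t, C * φ.normed volume t := by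
        apply norm_integral_le_of_norm_le hint (Eventually.of_forall hb)
    _ = C := by rw [integral_const_mul, φ.integral_normed, mul_one]

lemma conv_tendsto {n : ℕ} (φ : ℕ → ContDiffBump (0 : Euc n))
    (hφ : Tendsto (fun k => (φ k).rOut) atTop (𝓝 0))
    (f : Euc n → ℝ) (hf : Continuous f) (x : Euc n) :
    Tendsto (fun k => ((φ k).normed volume ⋆[lsmul ℝ ℝ, volume] f) x) atTop (𝓝 (f x)) :=
  ContDiffBump.convolution_tendsto_right_of_continuous hφ hf x

end Helpers

open ContinuousLinearMap
open scoped Convolution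

/-- **Boundary pairing for normal 2-currents.**
Let `ω` be a continuous 1-form on `ℝⁿ` whose distributional exterior differential is
represented by a continuous 2-form `Ω₂` (hypothesis `hrepr`, stated against all smooth
compactly supported 2-vector fields `τ`, using the pairing `⟨τ,β⟩ = Σ_{i,j} τᵢⱼ β(eᵢ,eⱼ)` and
the identity `⟨∂(τℒⁿ), α⟩ = −2∫ Σ_{i,j} ∂ᵢτᵢⱼ αⱼ`). Let `T` be a normal 2-current with compact
support, represented by a finite compactly supported measure `μ₂` with 2-vector density `τ`,
whose boundary is represented by a finite compactly supported measure `μ₁` with vector density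
`σ` (hypothesis `hbdry`, the duality `⟨∂T, α⟩ = ⟨T, dα⟩` on smooth compactly supported
1-forms). Then `⟨∂T, ω⟩ = ⟨T, dω⟩`. -/
theorem normal_current_boundary_pairing {n : ℕ}
    (ω : Euc n → (Euc n →L[ℝ] ℝ)) (hω : Continuous ω)
    (Ω₂ : Euc n → (Euc n →L[ℝ] Euc n →L[ℝ] ℝ)) (hΩcont : Continuous Ω₂)
    (hΩalt : ∀ x v w, Ω₂ x v w = -Ω₂ x w v)
    (hrepr : ∀ τ : Euc n → Fin n → Fin n → ℝ,
      (∀ i j, ContDiff ℝ (⊤ : ℕ∞) (fun x => τ x i j)) →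
      (∀ i j, HasCompactSupport (fun x => τ x i j)) →
      (∀ x i j, τ x i j = -τ x j i) →
      (∫ x, ∑ i : Fin n, ∑ j : Fin n, τ x i j * Ω₂ x (eVec i) (eVec j)) =
        -2 * ∫ x, ∑ i : Fin n, ∑ j : Fin n,
          fderiv ℝ (fun y => τ y i j) x (eVec i) * ω x (eVec j))
    (μ₂ μ₁ : Measure (Euc n)) [IsFiniteMeasure μ₂] [IsFiniteMeasure μ₁]
    (hsupp₂ : ∃ Kc : Set (Euc n), IsCompact Kc ∧ μ₂ Kcᶜ = 0)
    (hsupp₁ : ∃ Kc : Set (Euc n), IsCompact Kc ∧ μ₁ Kcᶜ = 0)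
    (τ : Euc n → Fin n → Fin n → ℝ) (hτalt : ∀ x i j, τ x i j = -τ x j i)
    (hτint : ∀ i j, Integrable (fun x => τ x i j) μ₂)
    (σ : Euc n → Fin n → ℝ) (hσint : ∀ j, Integrable (fun x => σ x j) μ₁)
    (hbdry : ∀ α : Euc n → (Euc n →L[ℝ] ℝ), ContDiff ℝ (⊤ : ℕ∞) α → HasCompactSupport α →
      (∫ x, (∑ i : Fin n, ∑ j : Fin n, τ x i j *
          (fderiv ℝ (fun y => α y (eVec j)) x (eVec i)
            - fderiv ℝ (fun y => α y (eVec i)) x (eVec j))) ∂μ₂) =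
        ∫ x, (∑ j : Fin n, σ x j * α x (eVec j)) ∂μ₁) :
    (∫ x, (∑ j : Fin n, σ x j * ω x (eVec j)) ∂μ₁) =
      ∫ x, (∑ i : Fin n, ∑ j : Fin n, τ x i j * Ω₂ x (eVec i) (eVec j)) ∂μ₂ := by
  classical
  obtain ⟨K₂, hK₂c, hK₂0⟩ := hsupp₂
  obtain ⟨K₁, hK₁c, hK₁0⟩ := hsupp₁
  obtain ⟨r, hr⟩ := ((hK₂c.union hK₁c).isBounded).subset_closedBall 0
  set R : ℝ := max r 0 + 1 with hRdef
  have hR1 : (1:ℝ) ≤ R := by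
    have : (0:ℝ) ≤ max r 0 := le_max_right _ _
    linarith
  have hrR : r < R := by
    have : r ≤ max r 0 := le_max_left _ _
    linarith
  have hKball : K₂ ∪ K₁ ⊆ ball 0 R :=
    hr.trans (closedBall_subset_ball hrR)
  -- component continuity
  have hωj : ∀ j, Continuous fun y => ω y (eVec j) := fun j =>
    ((ContinuousLinearMap.apply ℝ ℝ (eVec j)).continuous).comp hω
  have hΩij : ∀ i j, Continuous fun y => Ω₂ y (eVec i) (eVec j) := fun i j =>
    ((ContinuousLinearMap.apply ℝ ℝ (eVec j)).continuous).comp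
      (((ContinuousLinearMap.apply ℝ (Euc n →L[ℝ] ℝ) (eVec i)).continuous).comp hΩcont)
  -- the cutoff
  have hR0 : (0:ℝ) < R := by linarith
  set χb : ContDiffBump (0 : Euc n) := ⟨R, R + 1, hR0, by linarith⟩ with hχbdef
  -- mollifiers
  have hk2 : ∀ k : ℕ, (0:ℝ) < (k:ℝ) + 2 := by intro k; positivity
  set φf : ℕ → ContDiffBump (0 : Euc n) := fun k =>
    ⟨1 / ((k:ℝ) + 2), 2 / ((k:ℝ) + 2), by positivity,
      by rw [div_lt_div_iff₀ (hk2 k) (hk2 k)]; nlinarith [hk2 k]⟩ with hφfdef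
  have hφle1 : ∀ k, (φf k).rOut ≤ 1 := by
    intro k
    show 2 / ((k:ℝ) + 2) ≤ 1
    rw [div_le_one (hk2 k)]
    linarith [Nat.cast_nonneg (α := ℝ) k]
  have hφto : Tendsto (fun k => (φf k).rOut) atTop (𝓝 0) := by
    show Tendsto (fun k : ℕ => 2 / ((k:ℝ) + 2)) atTop (𝓝 0)
    exact tendsto_const_nhds.div_atTop
      (tendsto_atTop_add_const_right atTop 2 tendsto_natCast_atTop_atTop)
  set A : ℕ → Fin n → Euc n → ℝ := fun k j =>
    (φf k).normed volume ⋆[lsmul ℝ ℝ, volume] (fun y => ω y (eVec j)) with hAdef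
  set B : ℕ → Fin n → Fin n → Euc n → ℝ := fun k i j =>
    (φf k).normed volume ⋆[lsmul ℝ ℝ, volume] (fun y => Ω₂ y (eVec i) (eVec j)) with hBdef
  have hAsm : ∀ k j, ContDiff ℝ (⊤ : ℕ∞) (A k j) := fun k j =>
    contDiff_conv (φf k) _ (hωj j)
  have hBcont : ∀ k i j, Continuous (B k i j) := fun k i j =>
    (contDiff_conv (φf k) _ (hΩij i j)).continuous
  -- the curl identity
  have hcurl : ∀ k (x : Euc n) i j,
      fderiv ℝ (A k j) x (eVec i) - fderiv ℝ (A k i) x (eVec j) = B k i j x := by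
    intro k x i j
    rw [hAdef, hBdef]
    simp only []
    rw [fderiv_conv_apply _ _ (hωj j), fderiv_conv_apply _ _ (hωj i), conv_swap]
    exact key_curl ω hω Ω₂ hΩalt hrepr (φf k) i j x
  -- the test 1-forms
  set αf : ℕ → Euc n → (Euc n →L[ℝ] ℝ) := fun k y =>
    (χb y) • (∑ j : Fin n, A k j y • (EuclideanSpace.proj j : Euc n →L[ℝ] ℝ)) with hαdef
  have hαsm : ∀ k, ContDiff ℝ (⊤ : ℕ∞) (αf k) := by
    intro k
    apply ContDiff.smul χb.contDiff
    exact ContDiff.sum fun j _ => (hAsm k j).smul contDiff_const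
  have hαcs : ∀ k, HasCompactSupport (αf k) := by
    intro k
    apply χb.hasCompactSupport.mono
    intro y hy
    simp only [Function.mem_support] at hy ⊢
    intro h0
    exact hy (by rw [hαdef]; simp only []; rw [h0, zero_smul])
  have hαval : ∀ k y j, αf k y (eVec j) = χb y * A k j y := by
    intro k y j
    rw [hαdef]
    simp only [ContinuousLinearMap.smul_apply, ContinuousLinearMap.sum_apply, smul_eq_mul]
    congr 1
    have : ∀ j' : Fin n, (EuclideanSpace.proj j' : Euc n →L[ℝ] ℝ) (eVec j)
        = if j = j' then (1:ℝ) else 0 := by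
      intro j'
      simp [eVec, EuclideanSpace.single_apply, eq_comm]
    rw [Finset.sum_eq_single j]
    · simp [this]
    · intro c _ hc; simp [this, smul_eq_mul, Ne.symm hc]
    · simp
  -- fderiv of the test forms on the ball
  have hfd : ∀ k (x : Euc n), x ∈ ball (0:Euc n) R → ∀ j,
      fderiv ℝ (fun y => αf k y (eVec j)) x = fderiv ℝ (A k j) x := by
    intro k x hx j
    apply Filter.EventuallyEq.fderiv_eq
    have hball : ball (0:Euc n) R ∈ 𝓝 x := isOpen_ball.mem_nhds hx
    filter_upwards [hball] with y hy
    rw [hαval, χb.one_of_mem_closedBall (ball_subset_closedBall hy), one_mul]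
  -- apply the boundary hypothesis
  have hae₂ : ∀ᵐ x ∂μ₂, x ∈ K₂ := by
    rw [ae_iff]
    exact hK₂0
  have hae₁ : ∀ᵐ x ∂μ₁, x ∈ K₁ := by
    rw [ae_iff]
    exact hK₁0
  have E : ∀ k, (∫ x, (∑ i : Fin n, ∑ j : Fin n, τ x i j * B k i j x) ∂μ₂)
      = ∫ x, (∑ j : Fin n, σ x j * A k j x) ∂μ₁ := by
    intro k
    have h1 := hbdry (αf k) (hαsm k) (hαcs k)
    have h2 : (∫ x, (∑ i : Fin n, ∑ j : Fin n, τ x i j *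
        (fderiv ℝ (fun y => αf k y (eVec j)) x (eVec i)
          - fderiv ℝ (fun y => αf k y (eVec i)) x (eVec j))) ∂μ₂)
        = ∫ x, (∑ i : Fin n, ∑ j : Fin n, τ x i j * B k i j x) ∂μ₂ := by
      apply integral_congr_ae
      filter_upwards [hae₂] with x hx
      have hxball : x ∈ ball (0:Euc n) R := hKball (Or.inl hx)
      apply Finset.sum_congr rfl
      intro i _
      apply Finset.sum_congr rfl
      intro j _
      rw [hfd k x hxball j, hfd k x hxball i, hcurl k x i j]
    have h3 : (∫ x, (∑ j : Fin n, σ x j * αf k x (eVec j)) ∂μ₁)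
        = ∫ x, (∑ j : Fin n, σ x j * A k j x) ∂μ₁ := by
      apply integral_congr_ae
      filter_upwards [hae₁] with x hx
      apply Finset.sum_congr rfl
      intro j _
      rw [hαval]
      have hxball : x ∈ closedBall (0:Euc n) R :=
        ball_subset_closedBall (hKball (Or.inr hx))
      rw [χb.one_of_mem_closedBall hxball, one_mul]
    rw [← h2, h1, h3]
  -- bounds
  obtain ⟨C₁, hC₁'⟩ := (isCompact_closedBall (0:Euc n) (R+1)).exists_bound_of_continuousOn
    hω.norm.continuousOn
  have hΩnorm : Continuous fun x : Euc n => ‖Ω₂ x‖ := by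
    exact (continuous_norm (E := Euc n →L[ℝ] Euc n →L[ℝ] ℝ)).comp hΩcont
  obtain ⟨C₂, hC₂'⟩ := (isCompact_closedBall (0:Euc n) (R+1)).exists_bound_of_continuousOn
    hΩnorm.continuousOn
  have hC₁ : ∀ y ∈ closedBall (0:Euc n) (R+1), ‖ω y‖ ≤ C₁ := by
    intro y hy
    simpa using hC₁' y hy
  have hC₂ : ∀ y ∈ closedBall (0:Euc n) (R+1), ‖Ω₂ y‖ ≤ C₂ := by
    intro y hy
    simpa [abs_of_nonneg (norm_nonneg (Ω₂ y))] using hC₂' y hy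
  have heVecnorm : ∀ i : Fin n, ‖eVec i‖ = 1 := by intro i; simp [eVec]
  have hωbd : ∀ j, ∀ y : Euc n, ‖y‖ ≤ R + 1 → |ω y (eVec j)| ≤ C₁ := by
    intro j y hy
    have h1 : |ω y (eVec j)| ≤ ‖ω y‖ * ‖eVec j‖ := (ω y).le_opNorm (eVec j)
    rw [heVecnorm j, mul_one] at h1
    exact h1.trans (hC₁ y (by simpa using hy))
  have hΩbd : ∀ i j, ∀ y : Euc n, ‖y‖ ≤ R + 1 → |Ω₂ y (eVec i) (eVec j)| ≤ C₂ := by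
    intro i j y hy
    have h1 : |Ω₂ y (eVec i) (eVec j)| ≤ ‖Ω₂ y (eVec i)‖ * ‖eVec j‖ :=
      (Ω₂ y (eVec i)).le_opNorm (eVec j)
    have h2 : ‖Ω₂ y (eVec i)‖ ≤ ‖Ω₂ y‖ * ‖eVec i‖ := (Ω₂ y).le_opNorm (eVec i)
    rw [heVecnorm j, mul_one] at h1
    rw [heVecnorm i, mul_one] at h2
    exact h1.trans (h2.trans (hC₂ y (by simpa using hy)))
  have hnormK : ∀ x : Euc n, x ∈ K₂ ∪ K₁ → ‖x‖ ≤ R := by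
    intro x hx
    have := hKball hx
    rw [mem_ball_zero_iff] at this
    linarith
  -- limit on the μ₁ side
  have h1lim : Tendsto (fun k => ∫ x, (∑ j : Fin n, σ x j * A k j x) ∂μ₁) atTop
      (𝓝 (∫ x, (∑ j : Fin n, σ x j * ω x (eVec j)) ∂μ₁)) := by
    apply tendsto_integral_of_dominated_convergence
      (fun x => ∑ j : Fin n, |σ x j| * C₁)
    · intro k
      apply Finset.aestronglyMeasurable_fun_sum
      intro j _
      exact ((hσint j).aestronglyMeasurable.mul
        ((contDiff_conv (φf k) _ (hωj j)).continuous.aestronglyMeasurable))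
    · apply integrable_finset_sum
      intro j _
      exact ((hσint j).abs.mul_const C₁)
    · intro k
      filter_upwards [hae₁] with x hx
      have hxn : ‖x‖ ≤ R := hnormK x (Or.inr hx)
      calc ‖∑ j : Fin n, σ x j * A k j x‖ ≤ ∑ j : Fin n, ‖σ x j * A k j x‖ :=
            norm_sum_le _ _
        _ ≤ ∑ j : Fin n, |σ x j| * C₁ := by
            apply Finset.sum_le_sum
            intro j _
            rw [Real.norm_eq_abs, abs_mul]
            exact mul_le_mul_of_nonneg_left
              (conv_bound (φf k) (hφle1 k) _ C₁ R (hωbd j) x hxn) (abs_nonneg _)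
    · filter_upwards with x
      apply tendsto_finset_sum
      intro j _
      exact (conv_tendsto φf hφto _ (hωj j) x).const_mul (σ x j)
  -- limit on the μ₂ side
  have h2lim : Tendsto (fun k => ∫ x, (∑ i : Fin n, ∑ j : Fin n, τ x i j * B k i j x) ∂μ₂) atTop
      (𝓝 (∫ x, (∑ i : Fin n, ∑ j : Fin n, τ x i j * Ω₂ x (eVec i) (eVec j)) ∂μ₂)) := by
    apply tendsto_integral_of_dominated_convergence
      (fun x => ∑ i : Fin n, ∑ j : Fin n, |τ x i j| * C₂)
    · intro k
      apply Finset.aestronglyMeasurable_fun_sum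
      intro i _
      apply Finset.aestronglyMeasurable_fun_sum
      intro j _
      exact ((hτint i j).aestronglyMeasurable.mul
        ((hBcont k i j).aestronglyMeasurable))
    · apply integrable_finset_sum
      intro i _
      apply integrable_finset_sum
      intro j _
      exact ((hτint i j).abs.mul_const C₂)
    · intro k
      filter_upwards [hae₂] with x hx
      have hxn : ‖x‖ ≤ R := hnormK x (Or.inl hx)
      calc ‖∑ i : Fin n, ∑ j : Fin n, τ x i j * B k i j x‖
          ≤ ∑ i : Fin n, ‖∑ j : Fin n, τ x i j * B k i j x‖ := norm_sum_le _ _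
        _ ≤ ∑ i : Fin n, ∑ j : Fin n, |τ x i j| * C₂ := by
            apply Finset.sum_le_sum
            intro i _
            calc ‖∑ j : Fin n, τ x i j * B k i j x‖
                ≤ ∑ j : Fin n, ‖τ x i j * B k i j x‖ := norm_sum_le _ _
              _ ≤ ∑ j : Fin n, |τ x i j| * C₂ := by
                  apply Finset.sum_le_sum
                  intro j _
                  rw [Real.norm_eq_abs, abs_mul]
                  exact mul_le_mul_of_nonneg_left
                    (conv_bound (φf k) (hφle1 k) _ C₂ R (hΩbd i j) x hxn) (abs_nonneg _)
    · filter_upwards with x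
      apply tendsto_finset_sum
      intro i _
      apply tendsto_finset_sum
      intro j _
      exact (conv_tendsto φf hφto _ (hΩij i j) x).const_mul (τ x i j)
  exact tendsto_nhds_unique h1lim (h2lim.congr fun k => E k)
end
end

section
/- Let Ω ⊆ ℝᵏ be open, let Φ ∈ C¹(Ω, ℝⁿ) and let ω be a 1-form of class C¹ on ℝⁿ. Then d(Φ^#ω) = Φ^#(dω) in the sense of distributions, i.e. ⟨T, Φ^#(dω)⟩ = ⟨∂T, Φ^#ω⟩ for every 2-current T = τ ℒᵏ with τ a smooth compactly supported 2-vector field on Ω. -/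
open Set Filter Metric MeasureTheory Topology
open scoped Topology ENNReal Convolution

noncomputable section

namespace PB

variable {k : ℕ}

lemma infty_le' (n : ℕ) : (n : WithTop ℕ∞) ≤ ((⊤ : ℕ∞) : WithTop ℕ∞) :=
  ENat.natCast_le_of_coe_top_le_withTop le_rfl n

lemma integ_mul {c h : Euc k → ℝ} (hc : Continuous c) (hcs : HasCompactSupport c)
    (hh : Continuous h) : Integrable (fun x => c x * h x) :=
  (hc.mul hh).integrable_of_hasCompactSupport (hcs.mul_right)

lemma sum_antisymm_symm {a b : Fin k → Fin k → ℝ} (ha : ∀ i j, a i j = -a j i)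
    (hb : ∀ i j, b i j = b j i) :
    ∑ i : Fin k, ∑ j : Fin k, a i j * b i j = 0 := by
  have h : ∑ i : Fin k, ∑ j : Fin k, a i j * b i j
      = -∑ i : Fin k, ∑ j : Fin k, a i j * b i j := by
    nth_rewrite 1 [Finset.sum_comm]
    rw [← Finset.sum_neg_distrib]
    refine Finset.sum_congr rfl fun j _ => ?_
    rw [← Finset.sum_neg_distrib]
    refine Finset.sum_congr rfl fun i _ => ?_
    rw [ha j i, hb j i]; ring
  linarith

lemma sum_antisymm_swap {a c : Fin k → Fin k → ℝ} (ha : ∀ i j, a i j = -a j i) :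
    ∑ i : Fin k, ∑ j : Fin k, a i j * c j i
      = -∑ i : Fin k, ∑ j : Fin k, a i j * c i j := by
  nth_rewrite 1 [Finset.sum_comm]
  rw [← Finset.sum_neg_distrib]
  refine Finset.sum_congr rfl fun j _ => ?_
  rw [← Finset.sum_neg_distrib]
  refine Finset.sum_congr rfl fun i _ => ?_
  rw [ha j i]; ring

lemma sum_swap_eq {M : Fin k → Fin k → ℝ} :
    ∑ i : Fin k, ∑ j : Fin k, M i j = ∑ i : Fin k, ∑ j : Fin k, M j i :=
  Finset.sum_comm

lemma ibp {f g : Euc k → ℝ} (hf : ContDiff ℝ 1 f) (hg : ContDiff ℝ 1 g)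
    (hfs : HasCompactSupport f) (v : Euc k) :
    ∫ x, f x * fderiv ℝ g x v = -∫ x, fderiv ℝ f x v * g x := by
  have hdf : Continuous fun x => fderiv ℝ f x v :=
    (ContinuousLinearMap.apply ℝ ℝ v).continuous.comp (hf.continuous_fderiv one_ne_zero)
  have hdg : Continuous fun x => fderiv ℝ g x v :=
    (ContinuousLinearMap.apply ℝ ℝ v).continuous.comp (hg.continuous_fderiv one_ne_zero)
  refine integral_mul_fderiv_eq_neg_fderiv_mul_of_integrable ?_ ?_ ?_
    (fun x _ => hf.differentiable one_ne_zero x) (fun x _ => hg.differentiable one_ne_zero x)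
  · exact (hdf.mul hg.continuous).integrable_of_hasCompactSupport (hfs.fderiv_apply ℝ v).mul_right
  · exact integ_mul hf.continuous hfs hdg
  · exact integ_mul hf.continuous hfs hg.continuous

lemma schwarz {u : Euc k → ℝ} (hu : ContDiff ℝ (⊤ : ℕ∞) u) (x v w : Euc k) :
    fderiv ℝ (fun y => fderiv ℝ u y v) x w = fderiv ℝ (fun y => fderiv ℝ u y w) x v := by
  have hdiff : DifferentiableAt ℝ (fderiv ℝ u) x :=
    ((hu.fderiv_right (m := 1) (infty_le' 2)).differentiable one_ne_zero) x
  have h1 : ∀ z : Euc k, fderiv ℝ (fun y => fderiv ℝ u y z) x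
      = (fderiv ℝ (fderiv ℝ u) x).flip z := by
    intro z
    have := fderiv_clm_apply (c := fderiv ℝ u) (u := fun _ => z) hdiff (differentiableAt_const z)
    simpa using this
  have hsymm : IsSymmSndFDerivAt ℝ u x :=
    ContDiffAt.isSymmSndFDerivAt hu.contDiffAt (by simp only [minSmoothness_of_isRCLikeNormedField]; exact_mod_cast infty_le' 2)
  rw [h1 v, h1 w]
  simpa using hsymm w v

/-- `C¹` smoothness of a directional derivative of a `C^∞` function -/
lemma contDiff_dfa {F : Euc k → ℝ} (hF : ContDiff ℝ (⊤ : ℕ∞) F) (v : Euc k) :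
    ContDiff ℝ 1 (fun x => fderiv ℝ F x v) :=
  ((hF.fderiv_right (m := 1) (infty_le' 2)).clm_apply contDiff_const)

lemma cont_dfa {F : Euc k → ℝ} (hF : ContDiff ℝ 1 F) (v : Euc k) :
    Continuous fun x => fderiv ℝ F x v :=
  (ContinuousLinearMap.apply ℝ ℝ v).continuous.comp (hF.continuous_fderiv one_ne_zero)

lemma sum_integral {f : Fin k → Fin k → Euc k → ℝ} (hint : ∀ i j, Integrable (f i j)) :
    ∑ i : Fin k, ∑ j : Fin k, ∫ x, f i j x = ∫ x, ∑ i : Fin k, ∑ j : Fin k, f i j x := by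
  rw [integral_finset_sum _ (fun i _ => integrable_finset_sum _ (fun j _ => hint i j))]
  exact Finset.sum_congr rfl fun i _ => (integral_finset_sum _ (fun j _ => hint i j)).symm

section Step1

variable (τ : Euc k → Fin k → Fin k → ℝ)
  (hτsm : ∀ i j, ContDiff ℝ (⊤ : ℕ∞) (fun x => τ x i j))
  (hτc : ∀ i j, HasCompactSupport (fun x => τ x i j))
  (hτalt : ∀ x i j, τ x i j = -τ x j i)

include hτsm hτc hτalt in
lemma step1 {F G : Euc k → ℝ} (hF : ContDiff ℝ (⊤ : ℕ∞) F) (hG : ContDiff ℝ 1 G) :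
    ∑ i : Fin k, ∑ j : Fin k, ∫ x, τ x i j * (fderiv ℝ F x (eVec i) * fderiv ℝ G x (eVec j))
      = -∑ i : Fin k, ∑ j : Fin k,
          ∫ x, fderiv ℝ (fun y => τ y i j) x (eVec i) * (F x * fderiv ℝ G x (eVec j)) := by
  classical
  have h1 : (1 : WithTop ℕ∞) ≤ ((⊤ : ℕ∞) : WithTop ℕ∞) := by exact_mod_cast infty_le' 1
  have hτ1 : ∀ i j, ContDiff ℝ 1 fun x => τ x i j := fun i j => (hτsm i j).of_le h1
  have hF1 : ContDiff ℝ 1 F := hF.of_le h1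
  -- continuity facts
  have hcτ : ∀ i j, Continuous fun x => τ x i j := fun i j => (hτ1 i j).continuous
  have hcdτ : ∀ i j (v : Euc k), Continuous fun x => fderiv ℝ (fun y => τ y i j) x v :=
    fun i j v => cont_dfa (hτ1 i j) v
  have hcdF : ∀ v : Euc k, Continuous fun x => fderiv ℝ F x v := fun v => cont_dfa hF1 v
  have hcdG : ∀ v : Euc k, Continuous fun x => fderiv ℝ G x v := fun v => cont_dfa hG v
  have hcddF : ∀ v w : Euc k, Continuous fun x => fderiv ℝ (fun y => fderiv ℝ F y v) x w :=
    fun v w => cont_dfa (contDiff_dfa hF v) w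
  -- `K` : the common middle quantity
  set K : ℝ := ∑ i : Fin k, ∑ j : Fin k,
    ∫ x, fderiv ℝ (fun y => τ y i j) x (eVec i) * (G x * fderiv ℝ F x (eVec j)) with hK
  -- Part 1 : LHS = K
  have part1 : ∑ i : Fin k, ∑ j : Fin k,
      ∫ x, τ x i j * (fderiv ℝ F x (eVec i) * fderiv ℝ G x (eVec j)) = K := by
    -- IBP for each pair
    have ibp1 : ∀ i j : Fin k,
        ∫ x, fderiv ℝ (fun y => τ y i j * G y) x (eVec j) * fderiv ℝ F x (eVec i)
          = -∫ x, (τ x i j * G x) * fderiv ℝ (fun y => fderiv ℝ F y (eVec i)) x (eVec j) := by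
      intro i j
      have := ibp ((hτ1 i j).mul hG) (contDiff_dfa hF (eVec i)) ((hτc i j).mul_right) (eVec j)
      linarith [this]
    -- sum of second-derivative terms vanishes
    have hvan : ∑ i : Fin k, ∑ j : Fin k,
        ∫ x, (τ x i j * G x) * fderiv ℝ (fun y => fderiv ℝ F y (eVec i)) x (eVec j) = 0 := by
      rw [sum_integral (fun i j => by exact (integ_mul ((hcτ i j).mul hG.continuous)
        ((hτc i j).mul_right) (hcddF (eVec i) (eVec j))))]
      have : ∀ x : Euc k, ∑ i : Fin k, ∑ j : Fin k,
          (τ x i j * G x) * fderiv ℝ (fun y => fderiv ℝ F y (eVec i)) x (eVec j) = 0 := by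
        intro x
        have := sum_antisymm_symm (a := fun i j => τ x i j)
          (b := fun i j => G x * fderiv ℝ (fun y => fderiv ℝ F y (eVec i)) x (eVec j))
          (fun i j => hτalt x i j)
          (fun i j => by beta_reduce; rw [schwarz hF x (eVec i) (eVec j)])
        calc ∑ i : Fin k, ∑ j : Fin k,
            (τ x i j * G x) * fderiv ℝ (fun y => fderiv ℝ F y (eVec i)) x (eVec j)
            = ∑ i : Fin k, ∑ j : Fin k, τ x i j *
              (G x * fderiv ℝ (fun y => fderiv ℝ F y (eVec i)) x (eVec j)) := by
              refine Finset.sum_congr rfl fun i _ => Finset.sum_congr rfl fun j _ => by ring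
          _ = 0 := this
      simp only [this, integral_zero]
    -- expand the product rule in ibp1
    have hexp : ∀ i j : Fin k,
        ∫ x, fderiv ℝ (fun y => τ y i j * G y) x (eVec j) * fderiv ℝ F x (eVec i)
          = (∫ x, τ x i j * (fderiv ℝ G x (eVec j) * fderiv ℝ F x (eVec i)))
            + ∫ x, fderiv ℝ (fun y => τ y i j) x (eVec j) * (G x * fderiv ℝ F x (eVec i)) := by
      intro i j
      have hptw : ∀ x : Euc k,
          fderiv ℝ (fun y => τ y i j * G y) x (eVec j) * fderiv ℝ F x (eVec i)
            = τ x i j * (fderiv ℝ G x (eVec j) * fderiv ℝ F x (eVec i))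
              + fderiv ℝ (fun y => τ y i j) x (eVec j) * (G x * fderiv ℝ F x (eVec i)) := by
        intro x
        rw [fderiv_fun_mul ((hτ1 i j).differentiable one_ne_zero x) (hG.differentiable one_ne_zero x)]
        simp only [ContinuousLinearMap.add_apply, ContinuousLinearMap.smul_apply,
          smul_eq_mul]
        ring
      rw [show (fun x => fderiv ℝ (fun y => τ y i j * G y) x (eVec j) * fderiv ℝ F x (eVec i))
          = fun x => τ x i j * (fderiv ℝ G x (eVec j) * fderiv ℝ F x (eVec i))
            + fderiv ℝ (fun y => τ y i j) x (eVec j) * (G x * fderiv ℝ F x (eVec i))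
        from funext hptw]
      exact integral_add
        (integ_mul (hcτ i j) (hτc i j) ((hcdG (eVec j)).mul (hcdF (eVec i))))
        (integ_mul (hcdτ i j (eVec j)) ((hτc i j).fderiv_apply ℝ (eVec j))
          (hG.continuous.mul (hcdF (eVec i))))
    -- combine
    have hsum : (∑ i : Fin k, ∑ j : Fin k,
          ∫ x, τ x i j * (fderiv ℝ G x (eVec j) * fderiv ℝ F x (eVec i)))
        + (∑ i : Fin k, ∑ j : Fin k,
          ∫ x, fderiv ℝ (fun y => τ y i j) x (eVec j) * (G x * fderiv ℝ F x (eVec i))) = 0 := by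
      rw [← Finset.sum_add_distrib]
      calc (∑ i : Fin k,
            ((∑ j : Fin k, ∫ x, τ x i j * (fderiv ℝ G x (eVec j) * fderiv ℝ F x (eVec i)))
            + ∑ j : Fin k, ∫ x, fderiv ℝ (fun y => τ y i j) x (eVec j)
                * (G x * fderiv ℝ F x (eVec i))))
          = ∑ i : Fin k, ∑ j : Fin k,
            ∫ x, fderiv ℝ (fun y => τ y i j * G y) x (eVec j) * fderiv ℝ F x (eVec i) := by
            refine Finset.sum_congr rfl fun i _ => ?_
            rw [← Finset.sum_add_distrib]
            exact Finset.sum_congr rfl fun j _ => (hexp i j).symm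
        _ = ∑ i : Fin k, ∑ j : Fin k,
            -∫ x, (τ x i j * G x) * fderiv ℝ (fun y => fderiv ℝ F y (eVec i)) x (eVec j) := by
            exact Finset.sum_congr rfl fun i _ => Finset.sum_congr rfl fun j _ => ibp1 i j
        _ = 0 := by
            simp only [Finset.sum_neg_distrib, neg_eq_zero]
            exact hvan
    -- the second sum in `hsum` equals `-K` after swapping indices
    have hswap : ∑ i : Fin k, ∑ j : Fin k,
        ∫ x, fderiv ℝ (fun y => τ y i j) x (eVec j) * (G x * fderiv ℝ F x (eVec i)) = -K := by
      rw [sum_swap_eq (M := fun i j =>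
        ∫ x, fderiv ℝ (fun y => τ y i j) x (eVec j) * (G x * fderiv ℝ F x (eVec i)))]
      rw [hK, ← Finset.sum_neg_distrib]
      refine Finset.sum_congr rfl fun i _ => ?_
      rw [← Finset.sum_neg_distrib]
      refine Finset.sum_congr rfl fun j _ => ?_
      have hneg : (fun y => τ y j i) = fun y => -τ y i j := funext fun y => hτalt y j i
      have : ∀ x : Euc k, fderiv ℝ (fun y => τ y j i) x (eVec i) * (G x * fderiv ℝ F x (eVec j))
          = -(fderiv ℝ (fun y => τ y i j) x (eVec i) * (G x * fderiv ℝ F x (eVec j))) := by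
        intro x
        rw [hneg, fderiv_fun_neg]
        simp only [ContinuousLinearMap.neg_apply]
        ring
      rw [show (fun x => fderiv ℝ (fun y => τ y j i) x (eVec i)
            * (G x * fderiv ℝ F x (eVec j)))
          = fun x => -(fderiv ℝ (fun y => τ y i j) x (eVec i) * (G x * fderiv ℝ F x (eVec j)))
        from funext this]
      exact integral_neg _
    -- also the first sum in `hsum` equals the LHS
    have hfirst : ∑ i : Fin k, ∑ j : Fin k,
        ∫ x, τ x i j * (fderiv ℝ G x (eVec j) * fderiv ℝ F x (eVec i))
        = ∑ i : Fin k, ∑ j : Fin k,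
          ∫ x, τ x i j * (fderiv ℝ F x (eVec i) * fderiv ℝ G x (eVec j)) := by
      refine Finset.sum_congr rfl fun i _ => Finset.sum_congr rfl fun j _ => ?_
      congr 1; funext x; ring
    rw [hfirst, hswap] at hsum
    linarith
  -- Part 2 : K = -RHS
  have part2 : K = -∑ i : Fin k, ∑ j : Fin k,
      ∫ x, fderiv ℝ (fun y => τ y i j) x (eVec i) * (F x * fderiv ℝ G x (eVec j)) := by
    have ibp2 : ∀ i j : Fin k,
        ∫ x, (fderiv ℝ (fun y => τ y i j) x (eVec i)) * fderiv ℝ (fun y => F y * G y) x (eVec j)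
          = -∫ x, fderiv ℝ (fun y => fderiv ℝ (fun z => τ z i j) y (eVec i)) x (eVec j)
              * (F x * G x) := by
      intro i j
      exact ibp (contDiff_dfa (hτsm i j) (eVec i)) (hF1.mul hG)
        ((hτc i j).fderiv_apply ℝ (eVec i)) (eVec j)
    -- second-derivative sum vanishes
    have hvan2 : ∑ i : Fin k, ∑ j : Fin k,
        ∫ x, fderiv ℝ (fun y => fderiv ℝ (fun z => τ z i j) y (eVec i)) x (eVec j)
          * (F x * G x) = 0 := by
      rw [sum_integral (fun i j => by
        refine integ_mul (cont_dfa (contDiff_dfa (hτsm i j) (eVec i)) (eVec j)) ?_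
          (hF1.continuous.mul hG.continuous)
        exact (((hτc i j).fderiv_apply ℝ (eVec i)).fderiv_apply ℝ (eVec j)))]
      have hptw : ∀ x : Euc k, ∑ i : Fin k, ∑ j : Fin k,
          fderiv ℝ (fun y => fderiv ℝ (fun z => τ z i j) y (eVec i)) x (eVec j)
            * (F x * G x) = 0 := by
        intro x
        refine sum_antisymm_symm (a := fun i j =>
          fderiv ℝ (fun y => fderiv ℝ (fun z => τ z i j) y (eVec i)) x (eVec j))
          (b := fun _ _ => F x * G x) ?_ (fun _ _ => rfl)
        intro i j
        beta_reduce
        have hneg : (fun z => τ z j i) = fun z => -τ z i j := funext fun z => hτalt z j i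
        have e1 : (fun y => fderiv ℝ (fun z => τ z j i) y (eVec j))
            = fun y => -fderiv ℝ (fun z => τ z i j) y (eVec j) := by
          funext y; rw [hneg, fderiv_fun_neg]; simp
        rw [e1, fderiv_fun_neg]
        simp only [ContinuousLinearMap.neg_apply, neg_neg]
        exact schwarz (hτsm i j) x (eVec i) (eVec j)
      simp only [hptw, integral_zero]
    -- expand product rule
    have hexp2 : ∀ i j : Fin k,
        ∫ x, (fderiv ℝ (fun y => τ y i j) x (eVec i)) * fderiv ℝ (fun y => F y * G y) x (eVec j)
          = (∫ x, fderiv ℝ (fun y => τ y i j) x (eVec i) * (F x * fderiv ℝ G x (eVec j)))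
            + ∫ x, fderiv ℝ (fun y => τ y i j) x (eVec i) * (G x * fderiv ℝ F x (eVec j)) := by
      intro i j
      have hptw : ∀ x : Euc k,
          (fderiv ℝ (fun y => τ y i j) x (eVec i)) * fderiv ℝ (fun y => F y * G y) x (eVec j)
            = fderiv ℝ (fun y => τ y i j) x (eVec i) * (F x * fderiv ℝ G x (eVec j))
              + fderiv ℝ (fun y => τ y i j) x (eVec i) * (G x * fderiv ℝ F x (eVec j)) := by
        intro x
        rw [fderiv_fun_mul (hF1.differentiable one_ne_zero x) (hG.differentiable one_ne_zero x)]
        simp only [ContinuousLinearMap.add_apply, ContinuousLinearMap.smul_apply, smul_eq_mul]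
        ring
      rw [show (fun x => (fderiv ℝ (fun y => τ y i j) x (eVec i))
            * fderiv ℝ (fun y => F y * G y) x (eVec j))
          = fun x => fderiv ℝ (fun y => τ y i j) x (eVec i) * (F x * fderiv ℝ G x (eVec j))
              + fderiv ℝ (fun y => τ y i j) x (eVec i) * (G x * fderiv ℝ F x (eVec j))
        from funext hptw]
      exact integral_add
        (integ_mul (hcdτ i j (eVec i)) ((hτc i j).fderiv_apply ℝ (eVec i))
          (hF1.continuous.mul (hcdG (eVec j))))
        (integ_mul (hcdτ i j (eVec i)) ((hτc i j).fderiv_apply ℝ (eVec i))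
          (hG.continuous.mul (hcdF (eVec j))))
    have hsum2 : (∑ i : Fin k, ∑ j : Fin k,
          ∫ x, fderiv ℝ (fun y => τ y i j) x (eVec i) * (F x * fderiv ℝ G x (eVec j)))
        + K = 0 := by
      rw [hK, ← Finset.sum_add_distrib]
      calc (∑ i : Fin k,
            ((∑ j : Fin k, ∫ x, fderiv ℝ (fun y => τ y i j) x (eVec i)
                * (F x * fderiv ℝ G x (eVec j)))
            + ∑ j : Fin k, ∫ x, fderiv ℝ (fun y => τ y i j) x (eVec i)
                * (G x * fderiv ℝ F x (eVec j))))
          = ∑ i : Fin k, ∑ j : Fin k,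
            ∫ x, (fderiv ℝ (fun y => τ y i j) x (eVec i))
              * fderiv ℝ (fun y => F y * G y) x (eVec j) := by
            refine Finset.sum_congr rfl fun i _ => ?_
            rw [← Finset.sum_add_distrib]
            exact Finset.sum_congr rfl fun j _ => (hexp2 i j).symm
        _ = ∑ i : Fin k, ∑ j : Fin k,
            -∫ x, fderiv ℝ (fun y => fderiv ℝ (fun z => τ z i j) y (eVec i)) x (eVec j)
              * (F x * G x) :=
            Finset.sum_congr rfl fun i _ => Finset.sum_congr rfl fun j _ => ibp2 i j
        _ = 0 := by
            simp only [Finset.sum_neg_distrib, neg_eq_zero]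
            exact hvan2
    linarith
  rw [part1, part2]

end Step1

section Step2

variable (τ : Euc k → Fin k → Fin k → ℝ)
  (hτsm : ∀ i j, ContDiff ℝ (⊤ : ℕ∞) (fun x => τ x i j))
  (hτc : ∀ i j, HasCompactSupport (fun x => τ x i j))
  (hτalt : ∀ x i j, τ x i j = -τ x j i)

include hτsm hτc hτalt in
/-- The key integration-by-parts identity, for `F` of class `C¹` with compact support. -/
lemma step2 {F G : Euc k → ℝ} (hF : ContDiff ℝ 1 F) (hFs : HasCompactSupport F)
    (hG : ContDiff ℝ 1 G) :
    ∑ i : Fin k, ∑ j : Fin k, ∫ x, τ x i j * (fderiv ℝ F x (eVec i) * fderiv ℝ G x (eVec j))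
      = -∑ i : Fin k, ∑ j : Fin k,
          ∫ x, fderiv ℝ (fun y => τ y i j) x (eVec i) * (F x * fderiv ℝ G x (eVec j)) := by
  classical
  have hτ1 : ∀ i j, ContDiff ℝ 1 fun x => τ x i j :=
    fun i j => (hτsm i j).of_le (by exact_mod_cast infty_le' 1)
  have hcτ : ∀ i j, Continuous fun x => τ x i j := fun i j => (hτ1 i j).continuous
  have hcdτ : ∀ i j (v : Euc k), Continuous fun x => fderiv ℝ (fun y => τ y i j) x v :=
    fun i j v => cont_dfa (hτ1 i j) v
  have hcdG : ∀ v : Euc k, Continuous fun x => fderiv ℝ G x v := fun v => cont_dfa hG v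
  -- the mollifiers
  let φ : ℕ → ContDiffBump (0 : Euc k) := fun m =>
    { rIn := (1 / ((m : ℝ) + 1)) / 2
      rOut := 1 / ((m : ℝ) + 1)
      rIn_pos := by positivity
      rIn_lt_rOut := by
        have : (0:ℝ) < 1 / ((m : ℝ) + 1) := by positivity
        linarith }
  have hφr : Tendsto (fun m : ℕ => (φ m).rOut) atTop (𝓝 0) :=
    tendsto_one_div_add_atTop_nhds_zero_nat
  have hloc : ∀ m, LocallyIntegrable ((φ m).normed volume) volume :=
    fun m => ((φ m).integrable_normed).locallyIntegrable
  set L : ℝ →L[ℝ] ℝ →L[ℝ] ℝ := ContinuousLinearMap.lsmul ℝ ℝ with hL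
  let Fm : ℕ → Euc k → ℝ := fun m => ((φ m).normed volume) ⋆[L, volume] F
  have hFm_sm : ∀ m, ContDiff ℝ (⊤ : ℕ∞) (Fm m) := fun m =>
    HasCompactSupport.contDiff_convolution_left L (φ m).hasCompactSupport_normed
      ((φ m).contDiff_normed) (hF.continuous.locallyIntegrable)
  have hFm_val : ∀ m x, Fm m x = (((φ m).normed volume) ⋆[L, volume] F) x := fun m x => rfl
  have hFm_deriv : ∀ (m : ℕ) (x v : Euc k), fderiv ℝ (Fm m) x v
      = (((φ m).normed volume) ⋆[L, volume] (fun y => fderiv ℝ F y v)) x := by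
    intro m x v
    have h := (hFs.hasFDerivAt_convolution_right L (hloc m) hF x).fderiv
    show (fderiv ℝ (((φ m).normed volume) ⋆[L, volume] F) x) v = _
    rw [h]
    exact convolution_precompR_apply L (hloc m) (hFs.fderiv ℝ) (hF.continuous_fderiv one_ne_zero) x v
  -- convergence of mollified functions
  have hconv_tendsto : ∀ (H : Euc k → ℝ), Continuous H → ∀ x : Euc k,
      Tendsto (fun m => (((φ m).normed volume) ⋆[L, volume] H) x) atTop (𝓝 (H x)) :=
    fun H hH x => ContDiffBump.convolution_tendsto_right_of_continuous hφr hH x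
  -- uniform bounds on mollified functions
  have hconv_bound : ∀ (H : Euc k → ℝ) (C : ℝ), Continuous H → (∀ y, ‖H y‖ ≤ C) →
      ∀ (m : ℕ) (x : Euc k), ‖(((φ m).normed volume) ⋆[L, volume] H) x‖ ≤ 3 * C := by
    intro H C hH hC m x
    have h0 : (0:ℝ) ≤ C := le_trans (norm_nonneg _) (hC 0)
    have hd : dist ((((φ m).normed volume) ⋆[L, volume] H) x) (H x) ≤ 2 * C := by
      refine ContDiffBump.dist_normed_convolution_le hH.aestronglyMeasurable ?_
      intro y _
      calc dist (H y) (H x) ≤ ‖H y‖ + ‖H x‖ := dist_le_norm_add_norm _ _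
        _ ≤ 2 * C := by linarith [hC y, hC x]
    calc ‖(((φ m).normed volume) ⋆[L, volume] H) x‖
        = dist ((((φ m).normed volume) ⋆[L, volume] H) x) 0 := (dist_zero_right _).symm
      _ ≤ dist ((((φ m).normed volume) ⋆[L, volume] H) x) (H x) + dist (H x) 0 :=
          dist_triangle _ _ _
      _ ≤ 2 * C + C := by
          have := dist_zero_right (H x)
          refine add_le_add hd ?_
          rw [this]; exact hC x
      _ = 3 * C := by ring
  -- bounds on `F` and its derivatives
  obtain ⟨CF, hCF⟩ := hFs.exists_bound_of_continuous hF.continuous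
  have hCd' : ∀ i : Fin k, ∃ C, ∀ x, ‖fderiv ℝ F x (eVec i)‖ ≤ C := fun i =>
    (hFs.fderiv_apply ℝ (eVec i)).exists_bound_of_continuous (cont_dfa hF (eVec i))
  choose Cd hCd using hCd'
  -- convergence of the two families of integrals
  have tendsto1 : ∀ i j : Fin k,
      Tendsto (fun m => ∫ x, τ x i j * (fderiv ℝ (Fm m) x (eVec i) * fderiv ℝ G x (eVec j)))
        atTop (𝓝 (∫ x, τ x i j * (fderiv ℝ F x (eVec i) * fderiv ℝ G x (eVec j)))) := by
    intro i j
    refine tendsto_integral_of_dominated_convergence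
      (fun x => ‖τ x i j‖ * (3 * Cd i * ‖fderiv ℝ G x (eVec j)‖)) ?_ ?_ ?_ ?_
    · intro m
      exact ((hcτ i j).mul ((cont_dfa ((hFm_sm m).of_le (by exact_mod_cast infty_le' 1))
        (eVec i)).mul (hcdG (eVec j)))).aestronglyMeasurable
    · refine ((hcτ i j).norm.mul (continuous_const.mul (hcdG (eVec j)).norm))
        |>.integrable_of_hasCompactSupport ?_
      exact (hτc i j).norm.mul_right
    · intro m
      refine Eventually.of_forall fun x => ?_
      rw [norm_mul, norm_mul]
      refine mul_le_mul_of_nonneg_left ?_ (norm_nonneg _)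
      refine mul_le_mul_of_nonneg_right ?_ (norm_nonneg _)
      rw [hFm_deriv m x (eVec i)]
      exact hconv_bound _ (Cd i) (cont_dfa hF (eVec i)) (hCd i) m x
    · refine Eventually.of_forall fun x => ?_
      have : Tendsto (fun m => fderiv ℝ (Fm m) x (eVec i)) atTop
          (𝓝 (fderiv ℝ F x (eVec i))) := by
        simp only [hFm_deriv]
        exact hconv_tendsto _ (cont_dfa hF (eVec i)) x
      exact ((this.mul_const _).const_mul _)
  have tendsto2 : ∀ i j : Fin k,
      Tendsto (fun m => ∫ x, fderiv ℝ (fun y => τ y i j) x (eVec i)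
          * (Fm m x * fderiv ℝ G x (eVec j)))
        atTop (𝓝 (∫ x, fderiv ℝ (fun y => τ y i j) x (eVec i)
          * (F x * fderiv ℝ G x (eVec j)))) := by
    intro i j
    refine tendsto_integral_of_dominated_convergence
      (fun x => ‖fderiv ℝ (fun y => τ y i j) x (eVec i)‖
        * (3 * CF * ‖fderiv ℝ G x (eVec j)‖)) ?_ ?_ ?_ ?_
    · intro m
      exact ((hcdτ i j (eVec i)).mul (((hFm_sm m).continuous).mul
        (hcdG (eVec j)))).aestronglyMeasurable
    · refine ((hcdτ i j (eVec i)).norm.mul (continuous_const.mul (hcdG (eVec j)).norm))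
        |>.integrable_of_hasCompactSupport ?_
      exact ((hτc i j).fderiv_apply ℝ (eVec i)).norm.mul_right
    · intro m
      refine Eventually.of_forall fun x => ?_
      rw [norm_mul, norm_mul]
      refine mul_le_mul_of_nonneg_left ?_ (norm_nonneg _)
      refine mul_le_mul_of_nonneg_right ?_ (norm_nonneg _)
      exact hconv_bound _ CF hF.continuous hCF m x
    · refine Eventually.of_forall fun x => ?_
      exact (((hconv_tendsto _ hF.continuous x).mul_const _).const_mul _)
  -- conclude
  have heq : ∀ m, ∑ i : Fin k, ∑ j : Fin k,
      ∫ x, τ x i j * (fderiv ℝ (Fm m) x (eVec i) * fderiv ℝ G x (eVec j))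
      = -∑ i : Fin k, ∑ j : Fin k,
        ∫ x, fderiv ℝ (fun y => τ y i j) x (eVec i) * (Fm m x * fderiv ℝ G x (eVec j)) :=
    fun m => step1 τ hτsm hτc hτalt (hFm_sm m) hG
  have t1 : Tendsto (fun m => ∑ i : Fin k, ∑ j : Fin k,
      ∫ x, τ x i j * (fderiv ℝ (Fm m) x (eVec i) * fderiv ℝ G x (eVec j))) atTop
      (𝓝 (∑ i : Fin k, ∑ j : Fin k,
        ∫ x, τ x i j * (fderiv ℝ F x (eVec i) * fderiv ℝ G x (eVec j)))) :=
    tendsto_finset_sum _ fun i _ => tendsto_finset_sum _ fun j _ => tendsto1 i j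
  have t2 : Tendsto (fun m => -∑ i : Fin k, ∑ j : Fin k,
      ∫ x, fderiv ℝ (fun y => τ y i j) x (eVec i) * (Fm m x * fderiv ℝ G x (eVec j))) atTop
      (𝓝 (-∑ i : Fin k, ∑ j : Fin k,
        ∫ x, fderiv ℝ (fun y => τ y i j) x (eVec i) * (F x * fderiv ℝ G x (eVec j)))) :=
    (tendsto_finset_sum _ fun i _ => tendsto_finset_sum _ fun j _ => tendsto2 i j).neg
  exact tendsto_nhds_unique (t1.congr heq) t2

end Step2

section Step3

lemma sum_comm3 {n : ℕ} (f : Fin k → Fin k → Fin n → ℝ) :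
    ∑ i : Fin k, ∑ j : Fin k, ∑ a : Fin n, f i j a
      = ∑ a : Fin n, ∑ i : Fin k, ∑ j : Fin k, f i j a := by
  calc ∑ i : Fin k, ∑ j : Fin k, ∑ a : Fin n, f i j a
      = ∑ i : Fin k, ∑ a : Fin n, ∑ j : Fin k, f i j a :=
        Finset.sum_congr rfl fun i _ => Finset.sum_comm
    _ = ∑ a : Fin n, ∑ i : Fin k, ∑ j : Fin k, f i j a := Finset.sum_comm

/-- Expansion of a linear functional on `Euc n` in the standard basis. -/
lemma clm_expand {n : ℕ} (L : Euc n →L[ℝ] ℝ) (v : Euc n) :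
    L v = ∑ a : Fin n, v a * L (eVec a) := by
  conv_lhs => rw [← (EuclideanSpace.basisFun (Fin n) ℝ).sum_repr v]
  rw [map_sum]
  refine Finset.sum_congr rfl fun a _ => ?_
  rw [L.map_smul]
  simp [EuclideanSpace.basisFun_apply, EuclideanSpace.basisFun_repr, eVec, smul_eq_mul]

/-- Cutoff extension of a `C¹` function on an open set. -/
lemma extension {Ω : Set (Euc k)} (hΩ : IsOpen Ω) {χ : Euc k → ℝ} (hχ : ContDiff ℝ 1 χ)
    (hχs : HasCompactSupport χ) (hχΩ : tsupport χ ⊆ Ω)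
    {U : Set (Euc k)} (hU : IsOpen U) (hUΩ : U ⊆ Ω) (hχ1 : ∀ x ∈ U, χ x = 1)
    {f : Euc k → ℝ} (hf : ContDiffOn ℝ 1 f Ω) :
    ∃ F : Euc k → ℝ, ContDiff ℝ 1 F ∧ HasCompactSupport F ∧
      (∀ x ∈ U, F x = f x) ∧ ∀ x ∈ U, fderiv ℝ F x = fderivWithin ℝ f Ω x := by
  refine ⟨fun x => χ x * Set.indicator Ω f x, ?_, ?_, ?_, ?_⟩
  · rw [contDiff_iff_contDiffAt]
    intro x
    by_cases hx : x ∈ Ω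
    · have hev : (fun y => χ y * Set.indicator Ω f y) =ᶠ[𝓝 x] fun y => χ y * f y := by
        filter_upwards [hΩ.mem_nhds hx] with y hy
        rw [Set.indicator_of_mem hy]
      exact (hχ.contDiffAt.mul ((hf x hx).contDiffAt (hΩ.mem_nhds hx))).congr_of_eventuallyEq
        hev
    · have hx' : x ∈ (tsupport χ)ᶜ := fun hc => hx (hχΩ hc)
      have hev : (fun y => χ y * Set.indicator Ω f y) =ᶠ[𝓝 x] fun _ => (0:ℝ) := by
        filter_upwards [(isClosed_tsupport χ).isOpen_compl.mem_nhds hx'] with y hy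
        rw [image_eq_zero_of_notMem_tsupport hy, zero_mul]
      exact contDiffAt_const.congr_of_eventuallyEq hev
  · exact hχs.mul_right
  · intro x hx
    beta_reduce
    rw [Set.indicator_of_mem (hUΩ hx), hχ1 x hx, one_mul]
  · intro x hx
    have hev : (fun y => χ y * Set.indicator Ω f y) =ᶠ[𝓝 x] f := by
      filter_upwards [hU.mem_nhds hx] with y hy
      rw [Set.indicator_of_mem (hUΩ hy), hχ1 y hy, one_mul]
    rw [hev.fderiv_eq, fderivWithin_of_isOpen hΩ (hUΩ hx)]

end Step3

end PB

open PB

/-- **Pullback commutes with the exterior differential, distributionally.**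
Let `Ω ⊆ ℝᵏ` be open, `Φ ∈ C¹(Ω, ℝⁿ)` and `ω` a `C¹` 1-form on `ℝⁿ`. Then
`d(Φ^#ω) = Φ^#(dω)` in the sense of distributions: for every 2-current `T = τ ℒᵏ` with `τ` a
smooth compactly supported 2-vector field on `Ω`, one has `⟨T, Φ^#(dω)⟩ = ⟨∂T, Φ^#ω⟩` (the
pairing is `⟨τ,β⟩ = Σ_{i,j} τᵢⱼ β(eᵢ,eⱼ)`, and `∂(τℒᵏ)` acts on continuous 1-forms `α` by
`−2 ∫ Σ_{i,j} ∂ᵢτᵢⱼ αⱼ`). -/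
theorem pullback_exterior_derivative_distributional {k n : ℕ}
    (Ω : Set (Euc k)) (hΩ : IsOpen Ω)
    (Φ : Euc k → Euc n) (hΦ : ContDiffOn ℝ 1 Φ Ω)
    (ω : Euc n → (Euc n →L[ℝ] ℝ)) (hω : ContDiff ℝ 1 ω)
    (τ : Euc k → Fin k → Fin k → ℝ)
    (hτsm : ∀ i j, ContDiff ℝ (⊤ : ℕ∞) (fun x => τ x i j))
    (hτsupp : ∀ i j, HasCompactSupport (fun x => τ x i j) ∧
      tsupport (fun x => τ x i j) ⊆ Ω)
    (hτalt : ∀ x i j, τ x i j = -τ x j i) :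
    (∫ x, ∑ i : Fin k, ∑ j : Fin k, τ x i j *
        (fderiv ℝ ω (Φ x) (fderivWithin ℝ Φ Ω x (eVec i)) (fderivWithin ℝ Φ Ω x (eVec j))
          - fderiv ℝ ω (Φ x) (fderivWithin ℝ Φ Ω x (eVec j))
              (fderivWithin ℝ Φ Ω x (eVec i)))) =
      -2 * ∫ x, ∑ i : Fin k, ∑ j : Fin k,
        fderiv ℝ (fun y => τ y i j) x (eVec i) *
          ω (Φ x) (fderivWithin ℝ Φ Ω x (eVec j)) := by
  classical
  have hτc : ∀ i j, HasCompactSupport fun x => τ x i j := fun i j => (hτsupp i j).1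
  have hτ1 : ∀ i j, ContDiff ℝ 1 fun x => τ x i j :=
    fun i j => (hτsm i j).of_le (by exact_mod_cast infty_le' 1)
  have hcτ : ∀ i j, Continuous fun x => τ x i j := fun i j => (hτ1 i j).continuous
  have hcdτ : ∀ i j (v : Euc k), Continuous fun x => fderiv ℝ (fun y => τ y i j) x v :=
    fun i j v => cont_dfa (hτ1 i j) v
  -- the compact set where all the τ's live
  set K : Set (Euc k) := ⋃ i : Fin k, ⋃ j : Fin k, tsupport fun x => τ x i j with hKdef
  have hKc : IsCompact K := isCompact_iUnion fun i => isCompact_iUnion fun j => hτc i j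
  have hKΩ : K ⊆ Ω :=
    Set.iUnion_subset fun i => Set.iUnion_subset fun j => (hτsupp i j).2
  have hKsub : ∀ i j, tsupport (fun x => τ x i j) ⊆ K := fun i j =>
    Set.subset_iUnion_of_subset i (Set.subset_iUnion_of_subset j subset_rfl)
  -- zero values outside K
  have hτzero : ∀ i j, ∀ x ∉ K, τ x i j = 0 := fun i j x hx =>
    image_eq_zero_of_notMem_tsupport (f := fun x => τ x i j) fun hc => hx (hKsub i j hc)
  have hdτzero : ∀ i j, ∀ x ∉ K, fderiv ℝ (fun y => τ y i j) x = 0 := by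
    intro i j x hx
    have hx' : x ∈ (tsupport fun y => τ y i j)ᶜ := fun hc => hx (hKsub i j hc)
    have hev : (fun y => τ y i j) =ᶠ[𝓝 x] fun _ => (0:ℝ) := by
      filter_upwards [(isClosed_tsupport _).isOpen_compl.mem_nhds hx'] with y hy
      exact image_eq_zero_of_notMem_tsupport (f := fun y => τ y i j) hy
    rw [hev.fderiv_eq]
    simp
  -- cutoff function
  obtain ⟨C, hCc, hKC, hCΩ⟩ := exists_compact_between hKc hΩ hKΩ
  obtain ⟨χ₀, hχ₀1, hχ₀0, -⟩ :=
    exists_contMDiffMap_one_nhds_of_subset_interior (modelWithCornersSelf ℝ (Euc k)) (n := (⊤ : ℕ∞)) hKc.isClosed hKC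
  rw [eventually_nhdsSet_iff_exists] at hχ₀1
  obtain ⟨U₀, hU₀o, hKU₀, hU₀1⟩ := hχ₀1
  set U : Set (Euc k) := U₀ ∩ Ω with hUdef
  have hUo : IsOpen U := hU₀o.inter hΩ
  have hUΩ : U ⊆ Ω := Set.inter_subset_right
  have hKU : K ⊆ U := fun x hx => ⟨hKU₀ hx, hKΩ hx⟩
  have hU1 : ∀ x ∈ U, (χ₀ : Euc k → ℝ) x = 1 := fun x hx => hU₀1 x hx.1
  have hχsm : ContDiff ℝ 1 (χ₀ : Euc k → ℝ) := by
    have h := χ₀.contMDiff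
    rw [contMDiff_iff_contDiff] at h
    exact h.of_le (by exact_mod_cast infty_le' 1)
  have hχsupp : Function.support (χ₀ : Euc k → ℝ) ⊆ C := fun x hx => by
    by_contra hc; exact hx (hχ₀0 x hc)
  have hχts : tsupport (χ₀ : Euc k → ℝ) ⊆ C := closure_minimal hχsupp hCc.isClosed
  have hχcs : HasCompactSupport (χ₀ : Euc k → ℝ) := hCc.of_isClosed_subset isClosed_closure hχts
  have hχΩ : tsupport (χ₀ : Euc k → ℝ) ⊆ Ω := hχts.trans hCΩ
  -- the component functions and their extensions
  have hωa : ∀ a : Fin n, ContDiff ℝ 1 fun y : Euc n => ω y (eVec a) :=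
    fun a => hω.clm_apply contDiff_const
  have hfa : ∀ a : Fin n, ContDiffOn ℝ 1 (fun x => ω (Φ x) (eVec a)) Ω :=
    fun a => (hωa a).comp_contDiffOn hΦ
  have hga : ∀ a : Fin n, ContDiffOn ℝ 1 (fun x => Φ x a) Ω :=
    fun a => (EuclideanSpace.proj (𝕜 := ℝ) a).contDiff.comp_contDiffOn hΦ
  have hFa' := fun a : Fin n =>
    extension hΩ hχsm hχcs hχΩ hUo hUΩ hU1 (hfa a)
  choose Fa hFa1 hFa2 hFa3 hFa4 using hFa'
  have hGa' := fun a : Fin n =>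
    extension hΩ hχsm hχcs hχΩ hUo hUΩ hU1 (hga a)
  choose Ga hGa1 hGa2 hGa3 hGa4 using hGa'
  -- differentiability of Φ within Ω
  have hΦd : ∀ x ∈ Ω, DifferentiableWithinAt ℝ Φ Ω x :=
    fun x hx => (hΦ.differentiableOn one_ne_zero) x hx
  -- pointwise component expansions on U
  have hproj : ∀ (a : Fin n), ∀ x ∈ U, ∀ v : Euc k,
      fderivWithin ℝ Φ Ω x v a = fderiv ℝ (Ga a) x v := by
    intro a x hx v
    rw [hGa4 a x hx]
    have hcomp : (fun y => Φ y a) = (EuclideanSpace.proj (𝕜 := ℝ) a) ∘ Φ := rfl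
    rw [hcomp, fderiv_comp_fderivWithin x (EuclideanSpace.proj (𝕜 := ℝ) a).differentiableAt
      (hΦd x (hUΩ hx)) (hΩ.uniqueDiffWithinAt (hUΩ hx))]
    rw [ContinuousLinearMap.fderiv]; rfl
  have hchain : ∀ (a : Fin n), ∀ x ∈ U, ∀ v : Euc k,
      fderiv ℝ (Fa a) x v
        = fderiv ℝ (fun y : Euc n => ω y (eVec a)) (Φ x) (fderivWithin ℝ Φ Ω x v) := by
    intro a x hx v
    rw [hFa4 a x hx]
    have hcomp : (fun x => ω (Φ x) (eVec a)) = (fun y : Euc n => ω y (eVec a)) ∘ Φ := rfl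
    rw [hcomp, fderiv_comp_fderivWithin x ((hωa a).differentiable one_ne_zero (Φ x))
      (hΦd x (hUΩ hx)) (hΩ.uniqueDiffWithinAt (hUΩ hx))]
    rfl
  have hωaderiv : ∀ (a : Fin n) (y : Euc n) (u : Euc n),
      fderiv ℝ (fun z : Euc n => ω z (eVec a)) y u = fderiv ℝ ω y u (eVec a) := by
    intro a y u
    rw [fderiv_clm_apply (hω.differentiable one_ne_zero y) (differentiableAt_const (eVec a))]
    simp
  -- the two pointwise expansions valid on U
  have hE : ∀ x ∈ U, ∀ u v : Euc k,
      fderiv ℝ ω (Φ x) (fderivWithin ℝ Φ Ω x u) (fderivWithin ℝ Φ Ω x v)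
        = ∑ a : Fin n, fderiv ℝ (Fa a) x u * fderiv ℝ (Ga a) x v := by
    intro x hx u v
    rw [clm_expand (fderiv ℝ ω (Φ x) (fderivWithin ℝ Φ Ω x u)) (fderivWithin ℝ Φ Ω x v)]
    refine Finset.sum_congr rfl fun a _ => ?_
    rw [hproj a x hx v, hchain a x hx u, hωaderiv a (Φ x) (fderivWithin ℝ Φ Ω x u)]
    ring
  have hw : ∀ x ∈ U, ∀ v : Euc k,
      ω (Φ x) (fderivWithin ℝ Φ Ω x v) = ∑ a : Fin n, Fa a x * fderiv ℝ (Ga a) x v := by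
    intro x hx v
    rw [clm_expand (ω (Φ x)) (fderivWithin ℝ Φ Ω x v)]
    refine Finset.sum_congr rfl fun a _ => ?_
    rw [hproj a x hx v, hFa3 a x hx]
    ring
  -- pointwise identity for the LHS integrand
  have id1 : ∀ x : Euc k, (∑ i : Fin k, ∑ j : Fin k, τ x i j *
        (fderiv ℝ ω (Φ x) (fderivWithin ℝ Φ Ω x (eVec i)) (fderivWithin ℝ Φ Ω x (eVec j))
          - fderiv ℝ ω (Φ x) (fderivWithin ℝ Φ Ω x (eVec j))
              (fderivWithin ℝ Φ Ω x (eVec i))))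
      = 2 * ∑ a : Fin n, ∑ i : Fin k, ∑ j : Fin k,
          τ x i j * (fderiv ℝ (Fa a) x (eVec i) * fderiv ℝ (Ga a) x (eVec j)) := by
    intro x
    by_cases hx : x ∈ U
    · have h1 : ∀ i j : Fin k, τ x i j *
          (fderiv ℝ ω (Φ x) (fderivWithin ℝ Φ Ω x (eVec i)) (fderivWithin ℝ Φ Ω x (eVec j))
            - fderiv ℝ ω (Φ x) (fderivWithin ℝ Φ Ω x (eVec j))
                (fderivWithin ℝ Φ Ω x (eVec i)))
          = (∑ a : Fin n, τ x i j * (fderiv ℝ (Fa a) x (eVec i) * fderiv ℝ (Ga a) x (eVec j)))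
            - ∑ a : Fin n, τ x i j *
                (fderiv ℝ (Fa a) x (eVec j) * fderiv ℝ (Ga a) x (eVec i)) := by
        intro i j
        rw [hE x hx (eVec i) (eVec j), hE x hx (eVec j) (eVec i), mul_sub,
          Finset.mul_sum, Finset.mul_sum]
      calc (∑ i : Fin k, ∑ j : Fin k, τ x i j *
            (fderiv ℝ ω (Φ x) (fderivWithin ℝ Φ Ω x (eVec i)) (fderivWithin ℝ Φ Ω x (eVec j))
              - fderiv ℝ ω (Φ x) (fderivWithin ℝ Φ Ω x (eVec j))
                  (fderivWithin ℝ Φ Ω x (eVec i))))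
          = ∑ i : Fin k, ∑ j : Fin k,
            ((∑ a : Fin n, τ x i j * (fderiv ℝ (Fa a) x (eVec i) * fderiv ℝ (Ga a) x (eVec j)))
            - ∑ a : Fin n, τ x i j *
                (fderiv ℝ (Fa a) x (eVec j) * fderiv ℝ (Ga a) x (eVec i))) :=
            Finset.sum_congr rfl fun i _ => Finset.sum_congr rfl fun j _ => h1 i j
        _ = (∑ i : Fin k, ∑ j : Fin k, ∑ a : Fin n,
              τ x i j * (fderiv ℝ (Fa a) x (eVec i) * fderiv ℝ (Ga a) x (eVec j)))
            - ∑ i : Fin k, ∑ j : Fin k, ∑ a : Fin n,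
              τ x i j * (fderiv ℝ (Fa a) x (eVec j) * fderiv ℝ (Ga a) x (eVec i)) := by
            rw [← Finset.sum_sub_distrib]
            refine Finset.sum_congr rfl fun i _ => ?_
            rw [← Finset.sum_sub_distrib]
        _ = 2 * ∑ a : Fin n, ∑ i : Fin k, ∑ j : Fin k,
              τ x i j * (fderiv ℝ (Fa a) x (eVec i) * fderiv ℝ (Ga a) x (eVec j)) := by
            rw [sum_comm3 (fun i j a =>
              τ x i j * (fderiv ℝ (Fa a) x (eVec i) * fderiv ℝ (Ga a) x (eVec j)))]
            rw [sum_comm3 (fun i j a =>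
              τ x i j * (fderiv ℝ (Fa a) x (eVec j) * fderiv ℝ (Ga a) x (eVec i)))]
            have hneg : ∀ a : Fin n, ∑ i : Fin k, ∑ j : Fin k,
                τ x i j * (fderiv ℝ (Fa a) x (eVec j) * fderiv ℝ (Ga a) x (eVec i))
                = -∑ i : Fin k, ∑ j : Fin k,
                  τ x i j * (fderiv ℝ (Fa a) x (eVec i) * fderiv ℝ (Ga a) x (eVec j)) := by
              intro a
              have := sum_antisymm_swap (a := fun i j => τ x i j)
                (c := fun i j => fderiv ℝ (Fa a) x (eVec i) * fderiv ℝ (Ga a) x (eVec j))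
                (fun i j => hτalt x i j)
              calc ∑ i : Fin k, ∑ j : Fin k,
                  τ x i j * (fderiv ℝ (Fa a) x (eVec j) * fderiv ℝ (Ga a) x (eVec i))
                  = ∑ i : Fin k, ∑ j : Fin k, τ x i j *
                    ((fun i j => fderiv ℝ (Fa a) x (eVec i) * fderiv ℝ (Ga a) x (eVec j)) j i) :=
                    rfl
                _ = -∑ i : Fin k, ∑ j : Fin k,
                    τ x i j * (fderiv ℝ (Fa a) x (eVec i) * fderiv ℝ (Ga a) x (eVec j)) := this
            rw [show (∑ a : Fin n, ∑ i : Fin k, ∑ j : Fin k,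
                τ x i j * (fderiv ℝ (Fa a) x (eVec j) * fderiv ℝ (Ga a) x (eVec i)))
              = ∑ a : Fin n, -∑ i : Fin k, ∑ j : Fin k,
                τ x i j * (fderiv ℝ (Fa a) x (eVec i) * fderiv ℝ (Ga a) x (eVec j))
              from Finset.sum_congr rfl fun a _ => hneg a]
            rw [Finset.sum_neg_distrib]
            ring
    · have hxK : x ∉ K := fun hc => hx (hKU hc)
      simp only [hτzero _ _ x hxK, zero_mul, Finset.sum_const_zero, mul_zero]
  -- pointwise identity for the RHS integrand
  have id2 : ∀ x : Euc k, (∑ i : Fin k, ∑ j : Fin k,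
        fderiv ℝ (fun y => τ y i j) x (eVec i) * ω (Φ x) (fderivWithin ℝ Φ Ω x (eVec j)))
      = ∑ a : Fin n, ∑ i : Fin k, ∑ j : Fin k,
          fderiv ℝ (fun y => τ y i j) x (eVec i)
            * (Fa a x * fderiv ℝ (Ga a) x (eVec j)) := by
    intro x
    by_cases hx : x ∈ U
    · calc (∑ i : Fin k, ∑ j : Fin k,
          fderiv ℝ (fun y => τ y i j) x (eVec i) * ω (Φ x) (fderivWithin ℝ Φ Ω x (eVec j)))
          = ∑ i : Fin k, ∑ j : Fin k, ∑ a : Fin n,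
            fderiv ℝ (fun y => τ y i j) x (eVec i)
              * (Fa a x * fderiv ℝ (Ga a) x (eVec j)) := by
            refine Finset.sum_congr rfl fun i _ => Finset.sum_congr rfl fun j _ => ?_
            rw [hw x hx (eVec j), Finset.mul_sum]
        _ = ∑ a : Fin n, ∑ i : Fin k, ∑ j : Fin k,
            fderiv ℝ (fun y => τ y i j) x (eVec i)
              * (Fa a x * fderiv ℝ (Ga a) x (eVec j)) := sum_comm3 _
    · have hxK : x ∉ K := fun hc => hx (hKU hc)
      have hz : ∀ i j : Fin k, fderiv ℝ (fun y => τ y i j) x (eVec i) = 0 := by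
        intro i j
        rw [hdτzero i j x hxK]
        rfl
      simp only [hz, zero_mul, Finset.sum_const_zero]
  -- integrability of all the summands
  have hint1 : ∀ (a : Fin n) (i j : Fin k), Integrable
      (fun x => τ x i j * (fderiv ℝ (Fa a) x (eVec i) * fderiv ℝ (Ga a) x (eVec j))) :=
    fun a i j => integ_mul (hcτ i j) (hτc i j)
      ((cont_dfa (hFa1 a) (eVec i)).mul (cont_dfa (hGa1 a) (eVec j)))
  have hint2 : ∀ (a : Fin n) (i j : Fin k), Integrable
      (fun x => fderiv ℝ (fun y => τ y i j) x (eVec i)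
        * (Fa a x * fderiv ℝ (Ga a) x (eVec j))) :=
    fun a i j => integ_mul (hcdτ i j (eVec i)) ((hτc i j).fderiv_apply ℝ (eVec i))
      ((hFa1 a).continuous.mul (cont_dfa (hGa1 a) (eVec j)))
  -- put everything together
  have hstep : ∀ a : Fin n,
      ∑ i : Fin k, ∑ j : Fin k,
        ∫ x, τ x i j * (fderiv ℝ (Fa a) x (eVec i) * fderiv ℝ (Ga a) x (eVec j))
      = -∑ i : Fin k, ∑ j : Fin k,
        ∫ x, fderiv ℝ (fun y => τ y i j) x (eVec i)
          * (Fa a x * fderiv ℝ (Ga a) x (eVec j)) :=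
    fun a => step2 τ hτsm hτc hτalt (hFa1 a) (hFa2 a) (hGa1 a)
  rw [integral_congr_ae (μ := volume) (Filter.Eventually.of_forall id1)]
  rw [integral_congr_ae (μ := volume) (Filter.Eventually.of_forall id2)]
  rw [MeasureTheory.integral_const_mul]
  rw [integral_finset_sum _ (fun a _ => integrable_finset_sum _ fun i _ =>
    integrable_finset_sum _ fun j _ => hint1 a i j)]
  rw [integral_finset_sum _ (fun a _ => integrable_finset_sum _ fun i _ =>
    integrable_finset_sum _ fun j _ => hint2 a i j)]
  rw [show (∑ a : Fin n, ∫ x, ∑ i : Fin k, ∑ j : Fin k,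
        τ x i j * (fderiv ℝ (Fa a) x (eVec i) * fderiv ℝ (Ga a) x (eVec j)))
      = ∑ a : Fin n, ∑ i : Fin k, ∑ j : Fin k,
        ∫ x, τ x i j * (fderiv ℝ (Fa a) x (eVec i) * fderiv ℝ (Ga a) x (eVec j))
    from Finset.sum_congr rfl fun a _ => (sum_integral (hint1 a)).symm]
  rw [show (∑ a : Fin n, ∫ x, ∑ i : Fin k, ∑ j : Fin k,
        fderiv ℝ (fun y => τ y i j) x (eVec i) * (Fa a x * fderiv ℝ (Ga a) x (eVec j)))
      = ∑ a : Fin n, ∑ i : Fin k, ∑ j : Fin k,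
        ∫ x, fderiv ℝ (fun y => τ y i j) x (eVec i)
          * (Fa a x * fderiv ℝ (Ga a) x (eVec j))
    from Finset.sum_congr rfl fun a _ => (sum_integral (hint2 a)).symm]
  rw [show (∑ a : Fin n, ∑ i : Fin k, ∑ j : Fin k,
        ∫ x, τ x i j * (fderiv ℝ (Fa a) x (eVec i) * fderiv ℝ (Ga a) x (eVec j)))
      = ∑ a : Fin n, -∑ i : Fin k, ∑ j : Fin k,
        ∫ x, fderiv ℝ (fun y => τ y i j) x (eVec i)
          * (Fa a x * fderiv ℝ (Ga a) x (eVec j))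
    from Finset.sum_congr rfl fun a _ => hstep a]
  rw [Finset.sum_neg_distrib]
  ring
end
end
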